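/- Let H be a subgroup of a finite group G and N a normal subgroup of G. Then HN is K-P_t-subnormal in G if and only if HN/N is K-P_t-subnormal in G/N. -/

import Mathlib

/-- One step of a `K`-`ℙ_t`-subnormal chain: `A ≤ B` and either `A` is normal in `B`,
or the index `|B : A|` is a prime `p` such that `p - 1` is not divisible by the
`(t+1)`-th power of any prime. -/
def KPtStep (t : ℕ) {G : Type*} [Group G] (A B : Subgroup G) : Prop :=
  A ≤ B ∧ ((A.subgroupOf B).Normal ∨
    ∃ p : ℕ, p.Prime ∧ A.relIndex B = p ∧ ∀ q : ℕ, q.Prime → ¬ q ^ (t + 1) ∣ (p - 1))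

/-- `H` is `K`-`ℙ_t`-subnormal in `G` if there is a chain
`H = H₀ ≤ H₁ ≤ ⋯ ≤ Hₙ = G` each step of which is a `KPtStep`. -/
def KPtSubnormal (t : ℕ) {G : Type*} [Group G] (H : Subgroup G) : Prop :=
  Relation.ReflTransGen (KPtStep t) H ⊤

/-! The condition is a property of a chain of subgroups between `H` and `G` that only
involves normality and indices. A surjection `f : G →* G'` induces a lattice isomorphism
between the subgroups of `G` containing `ker f` and the subgroups of `G'` which preserves
both, so chains can be pushed forward along `f` and pulled back, and `H ⊔ N` corresponds
to `(H ⊔ N) / N` under the quotient map. -/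

section

variable {t : ℕ} {G G' : Type*} [Group G] [Group G'] {f : G →* G'}

namespace KPtStep

theorem map {A B : Subgroup G} (hker : f.ker ≤ A) (h : KPtStep t A B) :
    KPtStep t (A.map f) (B.map f) := by
  obtain ⟨hle, hnormal | ⟨p, hp, hindex, hp_sub_one⟩⟩ := h
  · refine ⟨Subgroup.map_mono hle, Or.inl ?_⟩
    rw [Subgroup.normal_subgroupOf_iff (Subgroup.map_mono hle)]
    rintro _ _ ⟨a, ha, rfl⟩ ⟨b, hb, rfl⟩
    exact ⟨b * a * b⁻¹, (Subgroup.normal_subgroupOf_iff hle).mp hnormal a b ha hb, by simp⟩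
  · refine ⟨Subgroup.map_mono hle, Or.inr ⟨p, hp, ?_, hp_sub_one⟩⟩
    rwa [← Subgroup.relIndex_comap, Subgroup.comap_map_eq_self hker]

theorem comap (hf : Function.Surjective f) {A B : Subgroup G'} (h : KPtStep t A B) :
    KPtStep t (A.comap f) (B.comap f) := by
  obtain ⟨hle, hnormal | ⟨p, hp, hindex, hp_sub_one⟩⟩ := h
  · refine ⟨Subgroup.comap_mono hle, Or.inl ?_⟩
    rw [Subgroup.normal_subgroupOf_iff (Subgroup.comap_mono hle)]
    intro a b ha hb
    simpa using (Subgroup.normal_subgroupOf_iff hle).mp hnormal (f a) (f b) ha hb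
  · refine ⟨Subgroup.comap_mono hle, Or.inr ⟨p, hp, ?_, hp_sub_one⟩⟩
    rwa [Subgroup.relIndex_comap, Subgroup.map_comap_eq_self_of_surjective hf]

end KPtStep

theorem le_of_reflTransGen_kptStep {A B : Subgroup G}
    (h : Relation.ReflTransGen (KPtStep t) A B) : A ≤ B := by
  induction h with
  | refl => rfl
  | tail _ hstep ih => exact ih.trans hstep.1

theorem reflTransGen_kptStep_map {A B : Subgroup G} (hker : f.ker ≤ A)
    (h : Relation.ReflTransGen (KPtStep t) A B) :
    Relation.ReflTransGen (KPtStep t) (A.map f) (B.map f) := by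
  induction h with
  | refl => rfl
  | tail hAB hstep ih =>
    exact ih.tail (hstep.map (hker.trans (le_of_reflTransGen_kptStep hAB)))

namespace KPtSubnormal

theorem map (hf : Function.Surjective f) {H : Subgroup G} (hker : f.ker ≤ H)
    (h : KPtSubnormal t H) : KPtSubnormal t (H.map f) := by
  simpa [KPtSubnormal, Subgroup.map_top_of_surjective f hf] using
    reflTransGen_kptStep_map hker h

theorem comap (hf : Function.Surjective f) {H : Subgroup G'} (h : KPtSubnormal t H) :
    KPtSubnormal t (H.comap f) := by
  simpa [KPtSubnormal, Function.onFun] using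
    Relation.ReflTransGen.lift (Subgroup.comap f) (fun _ _ ↦ KPtStep.comap hf) _ _ h

end KPtSubnormal

theorem kptSubnormal_map_iff (hf : Function.Surjective f) {H : Subgroup G} (hker : f.ker ≤ H) :
    KPtSubnormal t (H.map f) ↔ KPtSubnormal t H :=
  ⟨fun h ↦ Subgroup.comap_map_eq_self hker ▸ h.comap hf, KPtSubnormal.map hf hker⟩

end

theorem stmt_5_general {G : Type*} [Group G] (t : ℕ)
    (H N : Subgroup G) [N.Normal] :
    KPtSubnormal t (H ⊔ N) ↔ KPtSubnormal t ((H ⊔ N).map (QuotientGroup.mk' N)) :=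
  (kptSubnormal_map_iff (QuotientGroup.mk'_surjective N)
    ((QuotientGroup.ker_mk' N).trans_le le_sup_right)).symm

theorem stmt_5 {G : Type*} [Group G] [Finite G] (t : ℕ) (ht : 1 ≤ t)
    (H N : Subgroup G) [N.Normal] :
    KPtSubnormal t (H ⊔ N) ↔ KPtSubnormal t ((H ⊔ N).map (QuotientGroup.mk' N)) :=
  stmt_5_general t H N
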